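/- arXiv:2011.14482 — 2 statements merged into one kernel-verified Lean document; each statement's English description precedes it below -/
import Mathlib

section
/- Let Q be a simple binary join query, G = (V, E) its hypergraph, H ⊆ attset(Q), I the set of isolated vertices, and J a non-empty subset of I. Define Q̃ = {R ∈ Q : scheme(R) ∩ (I \ J) = ∅}, and set H̃ = H ∩ attset(Q̃) and L̃ = attset(Q̃) \ H̃. Then J is precisely the set of isolated attributes determined by Q̃ and H̃, i.e., the set of vertices X ∈ L̃ such that {X} is the only edge incident to X in the subgraph of the hypergraph of Q̃ induced by L̃. -/
open scoped BigOperators Classical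

namespace BinaryJoins

/-! ### Hypergraphs, fractional edge coverings and packings

A hypergraph is given by a finite vertex set `V : Finset α` and a finite
edge set `E : Finset (Finset α)`.  A weight assignment is a function
`W : Finset α → ℝ` (only its values on `E` matter). -/

variable {α : Type} [DecidableEq α]

/-- The weight of a vertex `X`: the sum of the weights of all edges incident to `X`. -/
def vertexWeight (E : Finset (Finset α)) (W : Finset α → ℝ) (X : α) : ℝ :=
  ∑ e ∈ E.filter (fun e => X ∈ e), W e

/-- `W` is a fractional edge covering: edge weights lie in `[0,1]` and every
vertex of `V` has weight at least 1. -/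
def IsFracEdgeCover (V : Finset α) (E : Finset (Finset α)) (W : Finset α → ℝ) : Prop :=
  (∀ e ∈ E, 0 ≤ W e ∧ W e ≤ 1) ∧ ∀ X ∈ V, 1 ≤ vertexWeight E W X

/-- `W` is a fractional edge packing: edge weights lie in `[0,1]` and every
vertex of `V` has weight at most 1. -/
def IsFracEdgePack (V : Finset α) (E : Finset (Finset α)) (W : Finset α → ℝ) : Prop :=
  (∀ e ∈ E, 0 ≤ W e ∧ W e ≤ 1) ∧ ∀ X ∈ V, vertexWeight E W X ≤ 1

/-- The fractional edge covering number `ρ`: the smallest total weight of a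
fractional edge covering. -/
noncomputable def rho (V : Finset α) (E : Finset (Finset α)) : ℝ :=
  sInf {t | ∃ W : Finset α → ℝ, IsFracEdgeCover V E W ∧ t = ∑ e ∈ E, W e}

/-- The fractional edge packing number `τ`: the largest total weight of a
fractional edge packing. -/
noncomputable def tau (V : Finset α) (E : Finset (Finset α)) : ℝ :=
  sSup {t | ∃ W : Finset α → ℝ, IsFracEdgePack V E W ∧ t = ∑ e ∈ E, W e}

/-- A binary hypergraph: every edge is a 2-element subset of `V`, and every
vertex is incident to at least one edge. -/
def BinaryHG (V : Finset α) (E : Finset (Finset α)) : Prop :=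
  (∀ e ∈ E, e ⊆ V ∧ e.card = 2) ∧ ∀ X ∈ V, ∃ e ∈ E, X ∈ e


/-! ### Tuples, relations, and join queries

`dom` is the domain of values; a tuple over a set `U` of attributes is
represented as a function `att → Option dom` that is `some`-valued exactly
on `U`. -/

variable {att dom : Type}

/-- A (partial) tuple. -/
abbrev Tup (att dom : Type) := att → Option dom

/-- `u` is a tuple over the attribute set `U`. -/
def IsTupleOn (u : Tup att dom) (U : Set att) : Prop :=
  ∀ x : att, (u x).isSome ↔ x ∈ U

/-- The projection (restriction) of a tuple on an attribute set `V`. -/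
noncomputable def restrict (u : Tup att dom) (V : Set att) : Tup att dom :=
  fun x => if x ∈ V then u x else none

/-- A relation: a finite set of tuples over a common scheme. -/
structure Relation (att dom : Type) where
  scheme : Finset att
  tuples : Set (Tup att dom)
  finite : tuples.Finite
  wf : ∀ u ∈ tuples, IsTupleOn u ↑scheme

variable [DecidableEq att]

/-- A join query is a finite set of relations; `attset Q` is the set of all
attributes appearing in the schemes of its relations. -/
def attset (Q : Finset (Relation att dom)) : Finset att :=
  Q.biUnion fun R => R.scheme

/-- The result `Join(Q)` of a join query. -/
def JoinQ (Q : Finset (Relation att dom)) : Set (Tup att dom) :=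
  { u | IsTupleOn u ↑(attset Q) ∧ ∀ R ∈ Q, restrict u ↑R.scheme ∈ R.tuples }

/-- A query is simple if no two distinct relations share a scheme. -/
def SimpleQ (Q : Finset (Relation att dom)) : Prop :=
  ∀ R ∈ Q, ∀ S ∈ Q, R.scheme = S.scheme → R = S

/-- A query is binary if every relation's scheme has exactly two attributes. -/
def BinaryQ (Q : Finset (Relation att dom)) : Prop :=
  ∀ R ∈ Q, R.scheme.card = 2

/-- The input size `m` of a query. -/
noncomputable def inputSize (Q : Finset (Relation att dom)) : ℕ :=
  ∑ R ∈ Q, R.tuples.ncard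

/-- The edge set of the hypergraph defined by `Q` (its vertex set is `attset Q`). -/
def edgeSet (Q : Finset (Relation att dom)) : Finset (Finset att) :=
  Q.image fun R => R.scheme

/-! ### Heavy and light values -/

/-- Value `x` is heavy on attribute `X`: some relation of `Q` has at least
`m/λ` tuples carrying `x` on `X`. -/
def HeavyOn (Q : Finset (Relation att dom)) (lam : ℕ) (X : att) (x : dom) : Prop :=
  ∃ R ∈ Q, X ∈ R.scheme ∧
    (inputSize Q : ℝ) / (lam : ℝ) ≤ ({u ∈ R.tuples | u X = some x}.ncard : ℝ)

/-- Value `x` is heavy (on some attribute). -/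
def Heavy (Q : Finset (Relation att dom)) (lam : ℕ) (x : dom) : Prop :=
  ∃ X : att, HeavyOn Q lam X x

/-- Value `x` appears in at least one relation of `Q`. -/
def Appears (Q : Finset (Relation att dom)) (x : dom) : Prop :=
  ∃ R ∈ Q, ∃ X ∈ R.scheme, ∃ u ∈ R.tuples, u X = some x

/-- Value `x` appears on attribute `Y` in a relation of `Q`. -/
def AppearsOn (Q : Finset (Relation att dom)) (Y : att) (x : dom) : Prop :=
  ∃ R ∈ Q, Y ∈ R.scheme ∧ ∃ u ∈ R.tuples, u Y = some x

/-! ### Configurations and residual queries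

Below, `Hv : att → dom → Prop` is the "heavy" predicate (`Hv X x` meaning
that value `x` is heavy on attribute `X`); in applications it is
instantiated with `HeavyOn Q lam`. -/

/-- The set `config(Q, H)` of configurations of `H`: tuples over `H` whose
values are heavy. -/
def config (Hv : att → dom → Prop) (H : Finset att) : Set (Tup att dom) :=
  { η | IsTupleOn η ↑H ∧ ∀ X ∈ H, ∀ x : dom, η X = some x → Hv X x }

/-- The residual relation `R'ₑ(η)` (over `e \ H`) of the relation `R` with
scheme `e`, under configuration `η` of `H`: projections on `e \ H` of the
tuples of `R` that agree with `η` on `e ∩ H` and are light outside `H`. -/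
def ResidualTuples (Q : Finset (Relation att dom)) (Hv : att → dom → Prop)
    (H : Finset att) (η : Tup att dom) (R : Relation att dom) : Set (Tup att dom) :=
  { v | ∃ w ∈ R.tuples,
      (∀ X ∈ R.scheme ∩ H, w X = η X) ∧
      (∀ Y ∈ R.scheme \ H, ∀ y : dom, w Y = some y → ¬ Hv Y y ∧ Appears Q y) ∧
      v = restrict w ↑(R.scheme \ H) }

/-- The result of the residual query `Q'(η)`: tuples over `attset Q \ H`
whose projection on each active edge `e` belongs to `R'ₑ(η)`. -/
def JoinResidual (Q : Finset (Relation att dom)) (Hv : att → dom → Prop)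
    (H : Finset att) (η : Tup att dom) : Set (Tup att dom) :=
  { u | IsTupleOn u ↑(attset Q \ H) ∧
      ∀ R ∈ Q, (R.scheme \ H).Nonempty →
        restrict u ↑(R.scheme \ H) ∈ ResidualTuples Q Hv H η R }

/-- `m_η`: the total size of the relations of the residual query `Q'(η)`. -/
noncomputable def residualSize (Q : Finset (Relation att dom)) (Hv : att → dom → Prop)
    (H : Finset att) (η : Tup att dom) : ℕ :=
  ∑ R ∈ Q, if (R.scheme \ H).Nonempty then (ResidualTuples Q Hv H η R).ncard else 0

/-- Combine a tuple over a set disjoint from `H` with a configuration `η` over `H`. -/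
def combine (H : Finset att) (η u : Tup att dom) : Tup att dom :=
  fun x => if x ∈ H then η x else u x

/-! ### Cross edges, isolated attributes, and the semi-join reduction -/

/-- `e` is a cross edge w.r.t. `H`: it meets both `H` and its complement. -/
def IsCross (H : Finset att) (e : Finset att) : Prop :=
  (e ∩ H).Nonempty ∧ (e \ H).Nonempty

/-- The set `I` of isolated attributes: light attributes `X` such that `{X}`
is the only edge incident to `X` in the subgraph induced by the light
attributes `L = attset Q \ H`. -/
def isolatedSet (Q : Finset (Relation att dom)) (H : Finset att) : Finset att :=
  (attset Q \ H).filter fun X => ∀ R ∈ Q, X ∈ R.scheme → R.scheme \ H = {X}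

/-- The unary tuple over `{X}` carrying value `x`. -/
def singletonTup (X : att) (x : dom) : Tup att dom :=
  fun Y => if Y = X then some x else none

/-- `X` is a border attribute: a light attribute appearing in a cross edge. -/
def BorderAttr (Q : Finset (Relation att dom)) (H : Finset att) (X : att) : Prop :=
  X ∈ attset Q ∧ X ∉ H ∧ ∃ R ∈ Q, X ∈ R.scheme ∧ IsCross H R.scheme

/-- The set of values of the unary relation `R''_X(η)`: the intersection of
the residual relations `R'ₑ(η)` over all cross edges `e` containing `X`. -/
def Rpp (Q : Finset (Relation att dom)) (Hv : att → dom → Prop)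
    (H : Finset att) (η : Tup att dom) (X : att) : Set dom :=
  { x | ∀ R ∈ Q, IsCross H R.scheme → X ∈ R.scheme →
      singletonTup X x ∈ ResidualTuples Q Hv H η R }

/-- The cartesian product `Join(Q''_J(η))` of the unary relations `R''_X(η)`,
`X ∈ J` (for `J = I` this is `Join(Q''_isolated(η))`). -/
def JoinIso (Q : Finset (Relation att dom)) (Hv : att → dom → Prop)
    (H : Finset att) (η : Tup att dom) (J : Finset att) : Set (Tup att dom) :=
  { u | IsTupleOn u ↑J ∧ ∀ X ∈ J, ∀ x : dom, u X = some x → x ∈ Rpp Q Hv H η X }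

/-! ### The query `Q*` and its hypergraph -/

/-- The result `Join(Q*)` of the query `Q*`: tuples over `I ∪ H` that
(i) project into `R_e` for every cross edge `e` incident to `I`, (ii) take a
heavy value on every attribute of `H`, and (iii) take, on every `Y ∈ I`, a
value appearing on `Y` in a relation of `Q`. -/
def JoinStar (Q : Finset (Relation att dom)) (Hv : att → dom → Prop)
    (H : Finset att) : Set (Tup att dom) :=
  { t | IsTupleOn t ↑(isolatedSet Q H ∪ H) ∧
      (∀ R ∈ Q, IsCross H R.scheme → (R.scheme ∩ isolatedSet Q H).Nonempty →
        restrict t ↑R.scheme ∈ R.tuples) ∧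
      (∀ X ∈ H, ∀ x : dom, t X = some x → Hv X x) ∧
      (∀ Y ∈ isolatedSet Q H, ∀ y : dom, t Y = some y → AppearsOn Q Y y) }

/-- The edge set `E*` of the hypergraph `G*` of `Q*`: the cross edges of `G`
incident to `I`, a unary edge `{X}` for each `X ∈ H`, and a unary edge `{Y}`
for each `Y ∈ I`.  (Its vertex set is `V* = I ∪ H`.) -/
noncomputable def starEdges (Q : Finset (Relation att dom)) (H : Finset att) :
    Finset (Finset att) :=
  (edgeSet Q).filter (fun e => IsCross H e ∧ (e ∩ isolatedSet Q H).Nonempty)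
    ∪ H.image (fun X => {X}) ∪ (isolatedSet Q H).image (fun Y => {Y})

/-! ### The reduced query `Q''(η)` -/

/-- The reduced relation `R''ₑ(η)` of a light edge `e = scheme R`: the tuples
of `R'ₑ(η)` whose values on border attributes survive the semi-join
reduction. -/
def ReducedTuples (Q : Finset (Relation att dom)) (Hv : att → dom → Prop)
    (H : Finset att) (η : Tup att dom) (R : Relation att dom) : Set (Tup att dom) :=
  { u | u ∈ ResidualTuples Q Hv H η R ∧
      ∀ X ∈ R.scheme, BorderAttr Q H X → ∀ x : dom, u X = some x → x ∈ Rpp Q Hv H η X }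

/-- The result `Join(Q''_light(η))`: tuples over `L \ I` whose projection on
every light edge belongs to the corresponding reduced relation. -/
def JoinLight (Q : Finset (Relation att dom)) (Hv : att → dom → Prop)
    (H : Finset att) (η : Tup att dom) : Set (Tup att dom) :=
  { u | IsTupleOn u ↑((attset Q \ H) \ isolatedSet Q H) ∧
      ∀ R ∈ Q, R.scheme ∩ H = ∅ → restrict u ↑R.scheme ∈ ReducedTuples Q Hv H η R }

/-- The result `Join(Q''(η))` of the reduced query: tuples over `L` whose
projections on light edges are in the reduced relations and whose values on
isolated attributes are in the corresponding unary relations. -/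
def JoinReduced (Q : Finset (Relation att dom)) (Hv : att → dom → Prop)
    (H : Finset att) (η : Tup att dom) : Set (Tup att dom) :=
  { u | IsTupleOn u ↑(attset Q \ H) ∧
      (∀ R ∈ Q, R.scheme ∩ H = ∅ → restrict u ↑R.scheme ∈ ReducedTuples Q Hv H η R) ∧
      (∀ X ∈ isolatedSet Q H, ∀ x : dom, u X = some x → x ∈ Rpp Q Hv H η X) }

/-! Every relation containing an isolated attribute `Z` has `Z` as its only attribute outside
`H`. Hence a relation through a light attribute `X ∉ K` never meets a set `K` of isolated
attributes, so deleting the relations that meet `K` keeps every relation through `X`, and the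
isolated attributes of what is left are exactly those of `Q` outside `K`. For `K = I \ J` this
leaves `J`; replacing `H` by `H ∩ attset Q̃` changes nothing, as every scheme of `Q̃` lies in
`attset Q̃`. -/

section Isolated

variable {Q : Finset (Relation att dom)} {H K : Finset att} {X : att}

theorem mem_attset : X ∈ attset Q ↔ ∃ R ∈ Q, X ∈ R.scheme := Finset.mem_biUnion

theorem scheme_subset_attset {R : Relation att dom} (hR : R ∈ Q) : R.scheme ⊆ attset Q :=
  Finset.subset_biUnion_of_mem _ hR

theorem mem_isolatedSet :
    X ∈ isolatedSet Q H ↔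
      X ∈ attset Q ∧ X ∉ H ∧ ∀ R ∈ Q, X ∈ R.scheme → R.scheme \ H = {X} := by
  simp only [isolatedSet, Finset.mem_filter, Finset.mem_sdiff, and_assoc]

theorem isolatedSet_inter_attset : isolatedSet Q (H ∩ attset Q) = isolatedSet Q H := by
  have scheme_sdiff : ∀ R ∈ Q, R.scheme \ (H ∩ attset Q) = R.scheme \ H := fun R hR => by
    rw [Finset.sdiff_inter_distrib_right,
      Finset.sdiff_eq_empty_iff_subset.2 (scheme_subset_attset hR), Finset.union_empty]
  ext X
  simp only [mem_isolatedSet]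
  refine and_congr_right fun hXQ => and_congr (by simp [hXQ]) ?_
  exact forall₂_congr fun R hR => by rw [scheme_sdiff R hR]

theorem scheme_inter_eq_empty_of_notMem {R : Relation att dom} (hR : R ∈ Q)
    (hK : K ⊆ isolatedSet Q H) (hXR : X ∈ R.scheme) (hXH : X ∉ H) (hXK : X ∉ K) :
    R.scheme ∩ K = ∅ := by
  refine Finset.eq_empty_of_forall_notMem fun Z hZ => ?_
  obtain ⟨hZR, hZK⟩ := Finset.mem_inter.1 hZ
  have hZ_only : R.scheme \ H = {Z} := (mem_isolatedSet.1 (hK hZK)).2.2 R hR hZR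
  have hXZ : X = Z := Finset.mem_singleton.1 (hZ_only ▸ Finset.mem_sdiff.2 ⟨hXR, hXH⟩)
  exact hXK (hXZ ▸ hZK)

theorem isolatedSet_filter_scheme_inter_eq_empty (hK : K ⊆ isolatedSet Q H) :
    isolatedSet (Q.filter fun R => R.scheme ∩ K = ∅) H = isolatedSet Q H \ K := by
  ext X
  rw [Finset.mem_sdiff, mem_isolatedSet, mem_isolatedSet]
  have kept (hXH : X ∉ H) (hXK : X ∉ K) (R : Relation att dom) (hR : R ∈ Q)
      (hXR : X ∈ R.scheme) : R ∈ Q.filter fun R => R.scheme ∩ K = ∅ :=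
    Finset.mem_filter.2 ⟨hR, scheme_inter_eq_empty_of_notMem hR hK hXR hXH hXK⟩
  constructor
  · rintro ⟨hXQ, hXH, hiso⟩
    obtain ⟨R, hRf, hXR⟩ := mem_attset.1 hXQ
    obtain ⟨hR, hRK⟩ := Finset.mem_filter.1 hRf
    have hXK : X ∉ K := fun hXK => Finset.notMem_empty X (hRK ▸ Finset.mem_inter.2 ⟨hXR, hXK⟩)
    exact ⟨⟨mem_attset.2 ⟨R, hR, hXR⟩, hXH,
      fun R' hR' hXR' => hiso R' (kept hXH hXK R' hR' hXR') hXR'⟩, hXK⟩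
  · rintro ⟨⟨hXQ, hXH, hiso⟩, hXK⟩
    obtain ⟨R, hR, hXR⟩ := mem_attset.1 hXQ
    exact ⟨mem_attset.2 ⟨R, kept hXH hXK R hR hXR, hXR⟩, hXH,
      fun R' hR' => hiso R' (Finset.mem_filter.1 hR').1⟩

end Isolated

theorem isolated_of_subquery_general
    (Q : Finset (Relation att dom))
    (H : Finset att)
    (J : Finset att) (hJ : J ⊆ isolatedSet Q H)
    (Qt : Finset (Relation att dom))
    (hQt : Qt = Q.filter fun R => R.scheme ∩ (isolatedSet Q H \ J) = ∅) :
    isolatedSet Qt (H ∩ attset Qt) = J := by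
  rw [isolatedSet_inter_attset, hQt, isolatedSet_filter_scheme_inter_eq_empty Finset.sdiff_subset,
    Finset.sdiff_sdiff_eq_self hJ]

/-- Let `Q` be a simple binary join query, `H ⊆ attset Q`,
`I` the set of isolated attributes, and `J ⊆ I` non-empty.  Let
`Q̃ = {R ∈ Q : scheme(R) ∩ (I \ J) = ∅}` and `H̃ = H ∩ attset Q̃`.  Then `J`
is precisely the set of isolated attributes determined by `Q̃` and `H̃`. -/
theorem isolated_of_subquery [Finite att] [Countable dom] [Infinite dom]
    (Q : Finset (Relation att dom)) (hS : SimpleQ Q) (hB : BinaryQ Q)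
    (H : Finset att) (hH : H ⊆ attset Q)
    (J : Finset att) (hJ : J ⊆ isolatedSet Q H) (hJne : J.Nonempty)
    (Qt : Finset (Relation att dom))
    (hQt : Qt = Q.filter fun R => R.scheme ∩ (isolatedSet Q H \ J) = ∅) :
    isolatedSet Qt (H ∩ attset Qt) = J :=
  isolated_of_subquery_general Q H J hJ Qt hQt

end BinaryJoins
end

section
/- Let Q be a simple binary join query, G = (V, E) its hypergraph, H ⊆ attset(Q), I the set of isolated vertices, and J a non-empty subset of I. Define Q̃ = {R ∈ Q : scheme(R) ∩ (I \ J) = ∅} with hypergraph G̃ = (Ṽ, Ẽ). Then every edge e ∈ E containing an attribute of J belongs to Ẽ; consequently, for any fractional edge packing W of G, its restriction W̃ to Ẽ is a fractional edge packing of G̃ and W_J = W̃_J, where W_J (resp. W̃_J) is the sum over Y ∈ J of the weight of Y under W (resp. W̃). -/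
open scoped BigOperators Classical

namespace BinaryJoins

/-! ### Hypergraphs, fractional edge coverings and packings

A hypergraph is given by a finite vertex set `V : Finset α` and a finite
edge set `E : Finset (Finset α)`.  A weight assignment is a function
`W : Finset α → ℝ` (only its values on `E` matter). -/

variable {α : Type} [DecidableEq α]

/-! ### Tuples, relations, and join queries

`dom` is the domain of values; a tuple over a set `U` of attributes is
represented as a function `att → Option dom` that is `some`-valued exactly
on `U`. -/

variable {att dom : Type}

variable [DecidableEq att]

/-! An isolated attribute `X` is the only light attribute of every edge containing it, so such an
edge meets no other isolated attribute and survives in `Q̃`. Deleting edges can only lower vertex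
weights, and leaves unchanged the weight of a vertex none of whose edges is deleted. -/

section Hypergraph

variable {V V' : Finset α} {E E' : Finset (Finset α)} {W : Finset α → ℝ} {X : α}

theorem vertexWeight_le_of_subset (hE : E' ⊆ E)
    (hW : ∀ e ∈ E, 0 ≤ W e) : vertexWeight E' W X ≤ vertexWeight E W X :=
  Finset.sum_le_sum_of_subset_of_nonneg (Finset.filter_subset_filter _ hE)
    fun e he _ => hW e (Finset.mem_filter.mp he).1

theorem vertexWeight_eq_of_subset (hE : E' ⊆ E)
    (hX : ∀ e ∈ E, X ∈ e → e ∈ E') : vertexWeight E' W X = vertexWeight E W X := by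
  unfold vertexWeight
  congr 1
  ext e
  simp only [Finset.mem_filter]
  exact ⟨fun ⟨he, hXe⟩ => ⟨hE he, hXe⟩, fun ⟨he, hXe⟩ => ⟨hX e he hXe, hXe⟩⟩

theorem IsFracEdgePack.mono (hW : IsFracEdgePack V E W) (hV : V' ⊆ V) (hE : E' ⊆ E) :
    IsFracEdgePack V' E' W :=
  ⟨fun e he => hW.1 e (hE he), fun X hX =>
    (vertexWeight_le_of_subset hE fun e he => (hW.1 e he).1).trans (hW.2 X (hV hX))⟩

end Hypergraph

section Query

variable {Q Q' : Finset (Relation att dom)} {H J : Finset att} {R : Relation att dom} {X Y : att}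

theorem attset_mono (h : Q' ⊆ Q) : attset Q' ⊆ attset Q :=
  Finset.biUnion_subset_biUnion_of_subset_left _ h

theorem edgeSet_mono (h : Q' ⊆ Q) : edgeSet Q' ⊆ edgeSet Q :=
  Finset.image_subset_image h

theorem eq_of_mem_isolatedSet_of_mem_scheme (hR : R ∈ Q) (hX : X ∈ isolatedSet Q H)
    (hXR : X ∈ R.scheme) (hY : Y ∈ isolatedSet Q H) (hYR : Y ∈ R.scheme) : Y = X := by
  have hYH : Y ∉ H := (Finset.mem_sdiff.mp (Finset.mem_filter.mp hY).1).2
  have hlight : R.scheme \ H = {X} := (Finset.mem_filter.mp hX).2 R hR hXR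
  simpa [hlight] using Finset.mem_sdiff.mpr ⟨hYR, hYH⟩

theorem mem_edgeSet_filter_of_inter_nonempty (hJ : J ⊆ isolatedSet Q H) {e : Finset att}
    (he : e ∈ edgeSet Q) (heJ : (e ∩ J).Nonempty) :
    e ∈ edgeSet (Q.filter fun R => R.scheme ∩ (isolatedSet Q H \ J) = ∅) := by
  obtain ⟨R, hR, rfl⟩ := Finset.mem_image.mp he
  obtain ⟨X, hX⟩ := heJ
  obtain ⟨hXR, hXJ⟩ := Finset.mem_inter.mp hX
  refine Finset.mem_image.mpr ⟨R, Finset.mem_filter.mpr ⟨hR, ?_⟩, rfl⟩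
  refine Finset.eq_empty_of_forall_notMem fun Y hY => ?_
  obtain ⟨hYR, hYI, hYJ⟩ : Y ∈ R.scheme ∧ Y ∈ isolatedSet Q H ∧ Y ∉ J := by
    simpa only [Finset.mem_inter, Finset.mem_sdiff] using hY
  exact hYJ (eq_of_mem_isolatedSet_of_mem_scheme hR (hJ hXJ) hXR hYI hYR ▸ hXJ)

end Query

theorem subquery_edges_and_packing_general
    (Q : Finset (Relation att dom))
    (H : Finset att)
    (J : Finset att) (hJ : J ⊆ isolatedSet Q H)
    (Qt : Finset (Relation att dom))
    (hQt : Qt = Q.filter fun R => R.scheme ∩ (isolatedSet Q H \ J) = ∅)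
    (W : Finset att → ℝ) (hW : IsFracEdgePack (attset Q) (edgeSet Q) W) :
    (∀ e ∈ edgeSet Q, (e ∩ J).Nonempty → e ∈ edgeSet Qt) ∧
    IsFracEdgePack (attset Qt) (edgeSet Qt) W ∧
    (∑ Y ∈ J, vertexWeight (edgeSet Q) W Y)
      = ∑ Y ∈ J, vertexWeight (edgeSet Qt) W Y := by
  subst hQt
  have hsub := Finset.filter_subset (fun R => R.scheme ∩ (isolatedSet Q H \ J) = ∅) Q
  have hkept := fun e => mem_edgeSet_filter_of_inter_nonempty (e := e) hJ
  refine ⟨hkept, hW.mono (attset_mono hsub) (edgeSet_mono hsub), ?_⟩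
  refine Finset.sum_congr rfl fun Y hY => (vertexWeight_eq_of_subset (edgeSet_mono hsub) ?_).symm
  exact fun e he hYe => hkept e he ⟨Y, Finset.mem_inter.mpr ⟨hYe, hY⟩⟩

/-- Let `Q` be a simple binary join query, `H ⊆ attset Q`,
`I` the set of isolated attributes, `J ⊆ I` non-empty, and
`Q̃ = {R ∈ Q : scheme(R) ∩ (I \ J) = ∅}` with hypergraph `G̃ = (Ṽ, Ẽ)`.
Then every edge of `E` containing an attribute of `J` belongs to `Ẽ`;
consequently, for any fractional edge packing `W` of `G`, its restriction to
`Ẽ` is a fractional edge packing of `G̃`, and `W_J = W̃_J`. -/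
theorem subquery_edges_and_packing [Finite att] [Countable dom] [Infinite dom]
    (Q : Finset (Relation att dom)) (hS : SimpleQ Q) (hB : BinaryQ Q)
    (H : Finset att) (hH : H ⊆ attset Q)
    (J : Finset att) (hJ : J ⊆ isolatedSet Q H) (hJne : J.Nonempty)
    (Qt : Finset (Relation att dom))
    (hQt : Qt = Q.filter fun R => R.scheme ∩ (isolatedSet Q H \ J) = ∅)
    (W : Finset att → ℝ) (hW : IsFracEdgePack (attset Q) (edgeSet Q) W) :
    (∀ e ∈ edgeSet Q, (e ∩ J).Nonempty → e ∈ edgeSet Qt) ∧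
    IsFracEdgePack (attset Qt) (edgeSet Qt) W ∧
    (∑ Y ∈ J, vertexWeight (edgeSet Q) W Y)
      = ∑ Y ∈ J, vertexWeight (edgeSet Qt) W Y :=
  subquery_edges_and_packing_general Q H J hJ Qt hQt W hW

end BinaryJoins
end
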